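/- Let F be a field, S = F[X_1,…,X_k], f ≥ g ≥ 2, and Φ ∈ S_1^{g×f} a matrix of homogeneous linear forms. If Φ is 1-generic, then Φ_H is 1-generic and f_H ≥ f − g. -/

import Mathlib

/-!
1-genericity with `a = (1, …, 1)` shows that the columns of `Φ` are linearly independent over
`F`, so `dim V_Φ = f`. As `V_{Φ,H} ⊆ V_Φ`, we have `Φ_H = Φ M` for a matrix `M` over `F` with
independent columns, which stay independent over `F̄`; hence `a Φ_H bᵀ = a Φ (M bᵀ) ≠ 0`.
For the bound, a vector of `V_Φ` whose `g` entries have no `X_k`-coefficient lies in `H^g`, so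
`V_{Φ,H}` contains the kernel of a linear map `V_Φ → F^g`.
-/

noncomputable section

namespace Stmt6

open MvPolynomial

variable (F : Type) [Field F]

/-- The space `S_d` of homogeneous polynomials of degree `d` in `S = F[X_1,…,X_k]`. -/
def Sd (k d : ℕ) : Submodule F (MvPolynomial (Fin k) F) :=
  MvPolynomial.homogeneousSubmodule (Fin k) F d

/-- `H = span(X_1, …, X_{k-1}) ⊆ S_1`, the span of the first `k-1` variables. -/
def Hsub (k : ℕ) : Submodule F (MvPolynomial (Fin k) F) :=
  Submodule.span F ((fun i : Fin k => (MvPolynomial.X i : MvPolynomial (Fin k) F)) ''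
    {i | (i : ℕ) < k - 1})

/-- `H^g ⊆ S^g`. -/
def Hpow (k g : ℕ) : Submodule F (Fin g → MvPolynomial (Fin k) F) :=
  Submodule.pi Set.univ (fun _ => Hsub F k)

/-- `V_Φ ⊆ S^g`, the linear span of the columns of `Φ`. -/
def colSpan {k g f : ℕ} (Φ : Matrix (Fin g) (Fin f) (MvPolynomial (Fin k) F)) :
    Submodule F (Fin g → MvPolynomial (Fin k) F) :=
  Submodule.span F (Set.range fun j : Fin f => fun i : Fin g => Φ i j)

/-- `Φ` is `1`-generic: for all nonzero `a ∈ F̄^g`, `b ∈ F̄^f` (with `F̄` the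
algebraic closure of `F`), `a·Φ·bᵀ ≠ 0`. -/
def OneGeneric {k g f : ℕ} (Φ : Matrix (Fin g) (Fin f) (MvPolynomial (Fin k) F)) : Prop :=
  ∀ (a : Fin g → AlgebraicClosure F) (b : Fin f → AlgebraicClosure F), a ≠ 0 → b ≠ 0 →
    (∑ i, ∑ j, MvPolynomial.C (a i) * MvPolynomial.C (b j) *
      MvPolynomial.map (algebraMap F (AlgebraicClosure F)) (Φ i j)) ≠ 0

open Matrix

section

variable {F} {k g f e : ℕ}

lemma mulVec_comp_C (Φ : Matrix (Fin g) (Fin f) (MvPolynomial (Fin k) F))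
    (c : Fin f → F) : Φ *ᵥ (C ∘ c) = ∑ j, c j • fun i => Φ i j := by
  ext1 i
  simp [mulVec, dotProduct, smul_eq_C_mul, mul_comm]

lemma linearIndependent_cols_iff {Φ : Matrix (Fin g) (Fin f) (MvPolynomial (Fin k) F)} :
    LinearIndependent F (fun j i => Φ i j) ↔
      ∀ c : Fin f → F, Φ *ᵥ (C ∘ c) = 0 → c = 0 := by
  simp only [Fintype.linearIndependent_iff, mulVec_comp_C, _root_.funext_iff, Pi.zero_apply]

lemma oneGeneric_iff (Φ : Matrix (Fin g) (Fin f) (MvPolynomial (Fin k) F)) :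
    OneGeneric F Φ ↔ ∀ (a : Fin g → AlgebraicClosure F) (b : Fin f → AlgebraicClosure F),
      a ≠ 0 → b ≠ 0 →
        (C ∘ a) ⬝ᵥ (Φ.map (map (algebraMap F (AlgebraicClosure F))) *ᵥ (C ∘ b)) ≠ 0 := by
  refine forall₄_congr fun a b _ _ => not_congr (Eq.congr_left ?_)
  refine Finset.sum_congr rfl fun i _ => ?_
  simp only [mulVec, dotProduct, Matrix.map_apply, Function.comp_apply, Finset.mul_sum]
  exact Finset.sum_congr rfl fun j _ => by ring

theorem _root_.Matrix.mulVec_injective_map_algebraMap_iff {R S m n : Type*} [CommRing R]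
    [CommRing S] [Algebra R S] [FaithfulSMul R S] [IsDomain S] [Finite m] [Fintype n]
    (M : Matrix m n R) :
    Function.Injective (M.map (algebraMap R S)).mulVec ↔ Function.Injective M.mulVec := by
  simp only [mulVec_injective_iff]
  exact linearIndependent_algebraMap_comp_iff

theorem _root_.Matrix.map_mulVec_comp {R S m n : Type*} [NonAssocSemiring R]
    [NonAssocSemiring S] [Fintype n] (φ : R →+* S) (M : Matrix m n R) (v : n → R) :
    M.map φ *ᵥ (φ ∘ v) = φ ∘ (M *ᵥ v) :=
  funext fun i => (RingHom.map_mulVec φ M v i).symm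

lemma map_mulVec_comp_C {K : Type*} [Field K] (φ : F →+* K)
    (Φ : Matrix (Fin g) (Fin f) (MvPolynomial (Fin k) F)) (c : Fin f → F) :
    Φ.map (map φ) *ᵥ (C ∘ φ ∘ c) = map φ ∘ (Φ *ᵥ (C ∘ c)) := by
  rw [← map_mulVec_comp]
  congr 1
  ext1 j
  exact (map_C φ (c j)).symm

lemma map_mul_map_C_mulVec_comp_C {K : Type*} [Field K] (φ : F →+* K)
    (Φ : Matrix (Fin g) (Fin f) (MvPolynomial (Fin k) F)) (M : Matrix (Fin f) (Fin e) F)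
    (b : Fin e → K) :
    (Φ * M.map (C (σ := Fin k))).map (map φ) *ᵥ (C ∘ b) =
      Φ.map (map φ) *ᵥ (C ∘ (M.map φ *ᵥ b)) := by
  have hM : (M.map (C (σ := Fin k))).map (map φ) = (M.map φ).map (C (σ := Fin k)) := by
    ext; simp
  rw [Matrix.map_mul, ← mulVec_mulVec, hM, map_mulVec_comp]

lemma OneGeneric.linearIndependent_cols
    {Φ : Matrix (Fin g) (Fin f) (MvPolynomial (Fin k) F)} (hΦ : OneGeneric F Φ) (hg : 0 < g) :
    LinearIndependent F (fun j i => Φ i j) := by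
  have : NeZero g := ⟨hg.ne'⟩
  refine linearIndependent_cols_iff.2 fun c hc => ?_
  by_contra hc0
  refine (oneGeneric_iff Φ).1 hΦ 1 (algebraMap F _ ∘ c) one_ne_zero ?_ ?_
  · exact fun h => hc0 (funext fun j => by simpa using congrFun h j)
  · rw [map_mulVec_comp_C, hc]
    simp

lemma OneGeneric.mul_map_C {Φ : Matrix (Fin g) (Fin f) (MvPolynomial (Fin k) F)}
    (hΦ : OneGeneric F Φ) {M : Matrix (Fin f) (Fin e) F} (hM : Function.Injective M.mulVec) :
    OneGeneric F (Φ * M.map (C (σ := Fin k))) := by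
  rw [oneGeneric_iff] at hΦ ⊢
  intro a b ha hb
  rw [map_mul_map_C_mulVec_comp_C]
  refine hΦ a _ ha fun h => hb ?_
  rw [← (mulVec_injective_map_algebraMap_iff M).2 hM |>.eq_iff, h, mulVec_zero]

lemma exists_eq_mul_map_C_of_cols_mem
    {Φ : Matrix (Fin g) (Fin f) (MvPolynomial (Fin k) F)}
    {Ψ : Matrix (Fin g) (Fin e) (MvPolynomial (Fin k) F)}
    (hΨ : ∀ j, (fun i => Ψ i j) ∈ colSpan F Φ) :
    ∃ M : Matrix (Fin f) (Fin e) F, Ψ = Φ * M.map (C (σ := Fin k)) := by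
  choose c hc using fun j => (Submodule.mem_span_range_iff_exists_fun F).1 (hΨ j)
  refine ⟨of fun t j => c j t, ?_⟩
  refine Matrix.ext fun i j => ?_
  simpa [mul_apply, smul_eq_C_mul, mul_comm] using (congrFun (hc j) i).symm

lemma injective_mulVec_of_linearIndependent_cols
    {Φ : Matrix (Fin g) (Fin f) (MvPolynomial (Fin k) F)} {M : Matrix (Fin f) (Fin e) F}
    (h : LinearIndependent F (fun j i => (Φ * M.map (C (σ := Fin k))) i j)) :
    Function.Injective M.mulVec := by
  rw [← coe_mulVecLin, ← LinearMap.ker_eq_bot, ker_mulVecLin_eq_bot_iff]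
  intro c hc
  refine linearIndependent_cols_iff.1 h c ?_
  rw [← mulVec_mulVec, map_mulVec_comp, hc]
  simp

theorem _root_.Submodule.finrank_le_finrank_inf_pi_add_card {K M ι : Type*} [Field K]
    [AddCommGroup M] [Module K M] [Fintype ι] (W : Submodule K (ι → M)) [FiniteDimensional K W]
    {P Q : Submodule K M} (hW : W ≤ Submodule.pi Set.univ fun _ => Q) (ℓ : M →ₗ[K] K)
    (hℓ : LinearMap.ker ℓ ⊓ Q ≤ P) :
    Module.finrank K W ≤
      Module.finrank K ↥(W ⊓ Submodule.pi Set.univ fun _ => P) + Fintype.card ι := by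
  let L : W →ₗ[K] ι → K := (LinearMap.pi fun i => ℓ ∘ₗ LinearMap.proj i) ∘ₗ W.subtype
  have hker : LinearMap.ker L ≤ (W ⊓ Submodule.pi Set.univ fun _ => P).comap W.subtype :=
    fun v hv => ⟨v.2, fun i _ => hℓ ⟨congrFun hv i, hW v.2 i trivial⟩⟩
  calc Module.finrank K W
      = Module.finrank K (LinearMap.range L) + Module.finrank K (LinearMap.ker L) :=
        L.finrank_range_add_finrank_ker.symm
    _ ≤ Fintype.card ι + Module.finrank K ↥(W ⊓ Submodule.pi Set.univ fun _ => P) := by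
        gcongr
        · exact (Submodule.finrank_le _).trans (Module.finrank_fintype_fun_eq_card K).le
        · exact (Submodule.finrank_mono hker).trans
            (Submodule.comapSubtypeEquivOfLe inf_le_left).finrank_eq.le
    _ = _ := add_comm _ _

lemma exists_ker_inf_Sd_one_le_Hsub (k : ℕ) :
    ∃ ℓ : MvPolynomial (Fin k) F →ₗ[F] F, LinearMap.ker ℓ ⊓ Sd F k 1 ≤ Hsub F k := by
  cases k with
  | zero =>
    refine ⟨0, fun p hp => ?_⟩
    have hp0 : p = 0 := by
      simpa [Sd, homogeneousSubmodule_one_eq_span_X, Set.range_eq_empty] using hp.2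
    exact hp0 ▸ zero_mem _
  | succ n =>
    have hS : Sd F (n + 1) 1 ≤ Hsub F (n + 1) ⊔ F ∙ X (Fin.last n) := by
      rw [Sd, homogeneousSubmodule_one_eq_span_X, Submodule.span_le]
      rintro _ ⟨i, rfl⟩
      obtain ⟨j, rfl⟩ | rfl := Fin.eq_castSucc_or_eq_last i
      · exact Submodule.mem_sup_left (Submodule.subset_span ⟨j.castSucc, by simp, rfl⟩)
      · exact Submodule.mem_sup_right (Submodule.mem_span_singleton_self _)
    have hH : Hsub F (n + 1) ≤ LinearMap.ker (lcoeff F (Finsupp.single (Fin.last n) 1)) := by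
      rw [Hsub, Submodule.span_le]
      rintro _ ⟨i, hi, rfl⟩
      simp only [Set.mem_ofPred_eq, add_tsub_cancel_right] at hi
      simp [coeff_X, Finsupp.single_left_inj, Fin.ext_iff, hi.ne]
    refine ⟨lcoeff F (Finsupp.single (Fin.last n) 1), fun p ⟨hp0, hp⟩ => ?_⟩
    obtain ⟨q, hq, r, hr, rfl⟩ := Submodule.mem_sup.1 (hS hp)
    obtain ⟨c, rfl⟩ := Submodule.mem_span_singleton.1 hr
    have hq0 : coeff (Finsupp.single (Fin.last n) 1) q = 0 := hH hq
    have hc : c = 0 := by simpa [hq0] using hp0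
    simpa [hc] using hq

end

theorem syzygy_distinguisher_stmt6
    (k f g : ℕ) (hg2 : 2 ≤ g)
    (Φ : Matrix (Fin g) (Fin f) (MvPolynomial (Fin k) F))
    (hΦ1 : ∀ i j, Φ i j ∈ Sd F k 1)
    (hgen : OneGeneric F Φ)
    (fH : ℕ) (hfH : fH = Module.finrank F ↥(colSpan F Φ ⊓ Hpow F k g))
    (ΦH : Matrix (Fin g) (Fin fH) (MvPolynomial (Fin k) F))
    (hcols1 : LinearIndependent F (fun j : Fin fH => fun i : Fin g => ΦH i j))
    (hcols2 : Submodule.span F (Set.range fun j : Fin fH => fun i : Fin g => ΦH i j)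
      = colSpan F Φ ⊓ Hpow F k g) :
    OneGeneric F ΦH ∧ f - g ≤ fH := by
  have hΦ := hgen.linearIndependent_cols (by omega)
  obtain ⟨M, rfl⟩ := exists_eq_mul_map_C_of_cols_mem fun j =>
    (hcols2.le (Submodule.subset_span ⟨j, rfl⟩)).1
  refine ⟨hgen.mul_map_C (injective_mulVec_of_linearIndependent_cols hcols1), ?_⟩
  obtain ⟨ℓ, hℓ⟩ := exists_ker_inf_Sd_one_le_Hsub k (F := F)
  have hle : colSpan F Φ ≤ Submodule.pi Set.univ fun _ => Sd F k 1 :=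
    Submodule.span_le.2 fun _ ⟨j, hj⟩ => hj ▸ fun i _ => hΦ1 i j
  have : FiniteDimensional F (colSpan F Φ) := .span_of_finite F (Set.finite_range _)
  have hdim := (colSpan F Φ).finrank_le_finrank_inf_pi_add_card hle ℓ hℓ
  rw [colSpan, finrank_span_eq_card hΦ, Fintype.card_fin, Fintype.card_fin] at hdim
  exact Nat.sub_le_iff_le_add.2 (hfH ▸ hdim)

end Stmt6
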